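/- arXiv:2107.01881 — 2 statements merged into one kernel-verified Lean document; each statement's English description precedes it below -/
import Mathlib

section
/- Fix integers T ≥ 1 and k ≥ 0 and gradients g_1,…,g_T ∈ E*. If S ⊆ [T] satisfies T − |S| ≤ k, then for every t ∈ [T] the threshold of the Top-k Filter satisfies m_t ≤ G(S); consequently, every passed round t ∈ P satisfies ‖g_t‖_* ≤ 2·G(S). -/
/-!
Top-k Filter (Algorithm 1): rounds are indexed `0, 1, …, T-1`.  For round `t`,
`topkThresh g k t` is the `(k+1)`-th largest value among `‖g 0‖, …, ‖g t‖`
(`0` if fewer than `k+1` values are available), i.e. the minimum of the list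
maintained by the algorithm.  Round `t` is passed iff `‖g t‖ ≤ 2 * topkThresh g k t`.
Gradients live in the continuous dual `E →L[ℝ] ℝ`, whose operator norm is the dual norm.
-/

/-- The `(k+1)`-th largest element of a list of reals ( `0` if the list has fewer
than `k+1` elements). -/
noncomputable def kthLargest (k : ℕ) (l : List ℝ) : ℝ :=
  (l.mergeSort (fun a b => decide (b ≤ a))).getD k 0

/-- `m_t`: the `(k+1)`-th largest value among `‖g 0‖, …, ‖g t‖`. -/
noncomputable def topkThresh {E : Type*} [NormedAddCommGroup E] [NormedSpace ℝ E]
    (g : ℕ → E →L[ℝ] ℝ) (k t : ℕ) : ℝ :=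
  kthLargest k ((List.range (t + 1)).map fun s => ‖g s‖)

/-- The set of rounds in `{0, …, T-1}` passed on to ALG by the Top-k Filter. -/
noncomputable def topkPassed {E : Type*} [NormedAddCommGroup E] [NormedSpace ℝ E]
    (g : ℕ → E →L[ℝ] ℝ) (k T : ℕ) : Finset ℕ :=
  (Finset.range T).filter fun t => ‖g t‖ ≤ 2 * topkThresh g k t

/-- `G(S) = max_{t ∈ S} ‖g t‖` (with `G(∅) = 0`). -/
noncomputable def gradMax {E : Type*} [NormedAddCommGroup E] [NormedSpace ℝ E]
    (g : ℕ → E →L[ℝ] ℝ) (S : Finset ℕ) : ℝ :=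
  ((S.sup fun t => ‖g t‖₊ : NNReal) : ℝ)

/-- `D(u,S) = max{‖w t - u‖ : t ∈ [T], ‖g t‖ ≤ 2 G(S)}` (with value `0` if no such `t`). -/
noncomputable def distMax {E : Type*} [NormedAddCommGroup E] [NormedSpace ℝ E]
    (g : ℕ → E →L[ℝ] ℝ) (w : ℕ → E) (u : E) (T : ℕ) (S : Finset ℕ) : ℝ :=
  ((((Finset.range T).filter fun t => ‖g t‖ ≤ 2 * gradMax g S).sup
      fun t => ‖w t - u‖₊ : NNReal) : ℝ)

/-
A threshold `m_t`, being the `(k+1)`-th largest of `‖g 0‖, …, ‖g t‖`, is at most any `G ≥ 0`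
exceeded by at most `k` of these values. Only rounds outside `S` can exceed `G(S)`, and there
are at most `T - |S| ≤ k` of them; a passed round then has `‖g t‖ ≤ 2 m_t ≤ 2 G(S)`.
-/

open Finset

theorem kthLargest_le_of_countP_le {k : ℕ} {l : List ℝ} {G : ℝ} (hG : 0 ≤ G)
    (hcount : l.countP (fun x => decide (G < x)) ≤ k) : kthLargest k l ≤ G := by
  set l' := l.mergeSort fun a b => decide (b ≤ a)
  have hsorted : l'.Pairwise (· ≥ ·) := List.pairwise_mergeSort' (· ≥ ·) l
  rcases le_or_gt l'.length k with hk | hk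
  · exact (List.getD_eq_default _ _ hk).trans_le hG
  by_contra! hlt
  rw [kthLargest, List.getD_eq_getElem _ _ hk] at hlt
  have htake : ∀ x ∈ l'.take (k + 1), G < x := by
    rintro x hx
    obtain ⟨i, hi, rfl⟩ := List.mem_take_iff_getElem.mp hx
    exact hlt.trans_le (hsorted.rel_get_of_le (a := ⟨i, by omega⟩) (b := ⟨k, hk⟩) (by simp; omega))
  have hcount' : k + 1 ≤ l'.countP (fun x => decide (G < x)) :=
    calc k + 1 = (l'.take (k + 1)).length := by simp; omega
      _ = (l'.take (k + 1)).countP (fun x => decide (G < x)) :=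
        (List.countP_eq_length.mpr fun x hx => by simpa using htake x hx).symm
      _ ≤ l'.countP (fun x => decide (G < x)) := (List.take_sublist _ _).countP_le
  rw [(List.mergeSort_perm l _).countP_eq] at hcount'
  omega

theorem countP_map_range_eq_card_filter (t : ℕ) (f : ℕ → ℝ) (G : ℝ) :
    ((List.range t).map f).countP (fun x => decide (G < x)) = #{s ∈ range t | G < f s} := by
  rw [List.countP_map, List.countP_eq_length_filter]
  simp only [card_def, filter_val, range_val, Multiset.range, Multiset.filter_coe,
    Multiset.coe_card]
  rfl

section

variable {E : Type*} [NormedAddCommGroup E] [NormedSpace ℝ E] {g : ℕ → E →L[ℝ] ℝ}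

theorem gradMax_nonneg (S : Finset ℕ) : 0 ≤ gradMax g S := NNReal.coe_nonneg _

theorem norm_le_gradMax {S : Finset ℕ} {s : ℕ} (hs : s ∈ S) : ‖g s‖ ≤ gradMax g S := by
  simpa [gradMax] using NNReal.coe_le_coe.mpr (le_sup (f := fun t => ‖g t‖₊) hs)

theorem topkThresh_le_of_card_filter_le {k t : ℕ} {G : ℝ} (hG : 0 ≤ G)
    (hcard : #{s ∈ range (t + 1) | G < ‖g s‖} ≤ k) : topkThresh g k t ≤ G :=
  kthLargest_le_of_countP_le hG ((countP_map_range_eq_card_filter _ _ G).trans_le hcard)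

theorem card_filter_gradMax_lt_le {T t : ℕ} (ht : t < T) {S : Finset ℕ} (hS : S ⊆ range T) :
    #{s ∈ range (t + 1) | gradMax g S < ‖g s‖} ≤ T - #S := by
  calc #{s ∈ range (t + 1) | gradMax g S < ‖g s‖}
      ≤ #(range T \ S) := card_le_card fun s hs => by
        rw [mem_filter, mem_range] at hs
        exact mem_sdiff.mpr ⟨mem_range.mpr (by omega), fun hsS => (norm_le_gradMax hsS).not_gt hs.2⟩
    _ = T - #S := by rw [card_sdiff_of_subset hS, card_range]

end

theorem topk_filter_thresh_le_and_passed_bound_general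
    {E : Type*} [NormedAddCommGroup E] [NormedSpace ℝ E]
    (T k : ℕ)
    (g : ℕ → E →L[ℝ] ℝ)
    (S : Finset ℕ) (hS : S ⊆ Finset.range T) (hSk : T - S.card ≤ k) :
    (∀ t ∈ Finset.range T, topkThresh g k t ≤ gradMax g S) ∧
      (∀ t ∈ topkPassed g k T, ‖g t‖ ≤ 2 * gradMax g S) := by
  have hthresh : ∀ t ∈ range T, topkThresh g k t ≤ gradMax g S := fun t ht =>
    topkThresh_le_of_card_filter_le (gradMax_nonneg S)
      ((card_filter_gradMax_lt_le (mem_range.mp ht) hS).trans hSk)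
  refine ⟨hthresh, fun t ht => ?_⟩
  rw [topkPassed, mem_filter] at ht
  linarith [hthresh t ht.1]

/-- if `T - |S| ≤ k`, then every threshold `m_t` of the Top-k Filter is at
most `G(S)`, and consequently every passed round has gradient norm at most `2 G(S)`. -/
theorem topk_filter_thresh_le_and_passed_bound
    {E : Type*} [NormedAddCommGroup E] [NormedSpace ℝ E] [FiniteDimensional ℝ E]
    (T k : ℕ) (hT : 1 ≤ T)
    (g : ℕ → E →L[ℝ] ℝ)
    (S : Finset ℕ) (hS : S ⊆ Finset.range T) (hSk : T - S.card ≤ k) :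
    (∀ t ∈ Finset.range T, topkThresh g k t ≤ gradMax g S) ∧
      (∀ t ∈ topkPassed g k T, ‖g t‖ ≤ 2 * gradMax g S) :=
  topk_filter_thresh_le_and_passed_bound_general T k g S hS hSk
end

section
/- Empirical-quantile upper confidence bound: let Y_1,…,Y_t be i.i.d. real random variables, let p ∈ (0,1) with Pr(Y_1 ≤ G_p) = p where G_p is the p-quantile of Y_1, let δ ∈ (0,1), and set u_t = √(2p(1−p)·ln(1/δ)/t) + ln(1/δ)/(3t). Let β = p − 2·u_t − (3/(2t))·ln(1/δ) and assume β > 0, and let G_β = inf{x : Pr(Y_1 ≤ x) ≥ β} be the β-quantile. Then with probability at least 1 − δ, the empirical quantile satisfies G_β ≤ q̂_t(p − u_t), where q̂_t(α) = inf{x ∈ ℝ : #{s ≤ t : Y_s ≤ x} ≥ α·t}. -/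
/-!
If `q̂_t(p - u) < G_β`, then at least `(p - u) t` of the samples lie strictly below `G_β`, and
each of them does so with probability at most `β`, by the definition of `G_β`. The Chernoff
bound for `t` independent indicators bounds this event by `exp (-t KL(p - u ‖ β))`, and the
margin built into `β` makes `KL(p - u ‖ β) ≥ ln(1/δ) / t`. For the latter, the bounds
`2 (y - 1) / (y + 1) ≤ log y ≤ (y - 1) (y² + 6 y + 1) / (4 y (y + 1))` (for `y ≥ 1`) reduce the
two logarithms of the divergence to rational functions, and what is left is a polynomial
inequality in `p`, `r = ln(1/δ) / t` and `A = √(2 p (1 - p) r)`.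
-/

open MeasureTheory ProbabilityTheory

/-- Empirical quantile of the samples `y 0, …, y (t-1)` at level `α`:
`q̂_t(α) = inf {x : #{s ≤ t : y s ≤ x} ≥ α t}`. -/
noncomputable def empQuantile (t : ℕ) (y : ℕ → ℝ) (α : ℝ) : ℝ :=
  sInf {x : ℝ | α * t ≤ (((Finset.range t).filter fun s => y s ≤ x).card : ℝ)}

open Real Set Filter
open scoped Finset

theorem Real.two_mul_sub_one_div_add_one_le_log {y : ℝ} (hy : 1 ≤ y) :
    2 * (y - 1) / (y + 1) ≤ log y := by
  rcases hy.eq_or_lt with rfl | hy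
  · simp
  have hsum := hasSum_log_one_add_inv (inv_pos.2 (sub_pos.2 hy))
  rw [inv_inv, add_sub_cancel] at hsum
  refine le_of_eq_of_le ?_ (le_hasSum hsum 0 fun k _ => by positivity)
  rw [show 2 * (y - 1)⁻¹ + 1 = (y + 1) / (y - 1) by field_simp; ring]
  simp only [CharP.cast_eq_zero, mul_zero, zero_add, div_one, mul_one, pow_one, one_div, inv_div]
  ring

theorem Real.log_le_cubic_div_of_one_le {y : ℝ} (hy : 1 ≤ y) :
    log y ≤ (y - 1) * (y ^ 2 + 6 * y + 1) / (4 * y * (y + 1)) := by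
  let g : ℝ → ℝ := fun z => (z - 1) * (z ^ 2 + 6 * z + 1) / (4 * z * (z + 1)) - log z
  have hderiv : ∀ z, 0 < z →
      HasDerivAt g ((z - 1) ^ 2 * (z ^ 2 + 1) / (4 * z ^ 2 * (z + 1) ^ 2)) z := by
    intro z hz
    have hnum : HasDerivAt (fun z : ℝ => (z - 1) * (z ^ 2 + 6 * z + 1))
        (3 * z ^ 2 + 10 * z - 5) z :=
      (((hasDerivAt_id' z).sub_const 1).mul (((hasDerivAt_pow 2 z).add
        ((hasDerivAt_id' z).const_mul 6)).add_const 1)).congr_deriv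
        (by simp only [Pi.add_apply]; ring)
    have hden : HasDerivAt (fun z : ℝ => 4 * z * (z + 1)) (4 * (2 * z + 1)) z :=
      (((hasDerivAt_id' z).const_mul 4).mul ((hasDerivAt_id' z).add_const 1)).congr_deriv
        (by ring)
    refine ((hnum.div hden (by positivity)).sub (hasDerivAt_log hz.ne')).congr_deriv ?_
    field_simp
    ring
  have hpos : ∀ z ∈ interior (Ici (1 : ℝ)), 0 < z := fun z hz => by
    rw [interior_Ici] at hz
    exact zero_lt_one.trans hz
  have hmono : MonotoneOn g (Ici 1) := by
    refine monotoneOn_of_deriv_nonneg (convex_Ici 1) ?_ ?_ ?_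
    · exact fun z hz =>
        (hderiv z (zero_lt_one.trans_le hz)).continuousAt.continuousWithinAt
    · exact fun z hz => (hderiv z (hpos z hz)).differentiableAt.differentiableWithinAt
    · intro z hz
      rw [(hderiv z (hpos z hz)).deriv]
      positivity
  have hg1 : g 1 = 0 := by norm_num [g]
  have h := hmono self_mem_Ici hy hy
  rw [hg1] at h
  exact sub_nonneg.1 h

noncomputable def bernoulliKL (a b : ℝ) : ℝ :=
  a * log (a / b) + (1 - a) * log ((1 - a) / (1 - b))

theorem le_bernoulliKL {a b : ℝ} (hb : 0 < b) (hba : b < a) (ha : a < 1) :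
    2 * a * (a - b) / (a + b) - (a - b) * ((1 - a) ^ 2 + 6 * (1 - a) * (1 - b) + (1 - b) ^ 2)
      / (4 * (1 - b) * ((1 - a) + (1 - b))) ≤ bernoulliKL a b := by
  have hm : 0 < 1 - a := by linarith
  have hn : 0 < 1 - b := by linarith
  have hfirst : 2 * a * (a - b) / (a + b) ≤ a * log (a / b) := by
    have h := Real.two_mul_sub_one_div_add_one_le_log ((one_le_div hb).2 hba.le)
    calc 2 * a * (a - b) / (a + b) = a * (2 * (a / b - 1) / (a / b + 1)) := by field_simp
      _ ≤ a * log (a / b) := by gcongr; linarith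
  have hsecond : (1 - a) * log ((1 - b) / (1 - a)) ≤
      (a - b) * ((1 - a) ^ 2 + 6 * (1 - a) * (1 - b) + (1 - b) ^ 2)
        / (4 * (1 - b) * ((1 - a) + (1 - b))) := by
    have h := Real.log_le_cubic_div_of_one_le ((one_le_div hm).2 (by linarith : 1 - a ≤ 1 - b))
    refine (mul_le_mul_of_nonneg_left h hm.le).trans_eq ?_
    field_simp
    ring
  rw [bernoulliKL, ← neg_neg (log ((1 - a) / (1 - b))), ← log_inv, inv_div]
  linarith

theorem margin_poly_le {p r A a b : ℝ} (hp0 : 0 ≤ p) (hp1 : p ≤ 1) (hr : 0 ≤ r) (hA : 0 ≤ A)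
    (hA2 : A ^ 2 = 2 * p * (1 - p) * r) (ha : a = p - A - r / 3)
    (hb : b = p - 2 * A - 13 / 6 * r) :
    (a - b) * ((1 - a) ^ 2 + 6 * (1 - a) * (1 - b) + (1 - b) ^ 2) * (a + b) ≤
      4 * (1 - b) * ((1 - a) + (1 - b)) * (2 * a * (a - b) - r * (a + b)) := by
  subst ha hb
  have hp : 0 ≤ p * (1 - p) := mul_nonneg hp0 (by linarith)
  have c3 : 0 ≤ 211 / 18 + 184 / 3 * p - 137 / 2 * p ^ 2 - 3 * p ^ 3 := by
    nlinarith [mul_nonneg hp (sub_nonneg.2 hp1), mul_nonneg hp hp0]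
  have c2 : 0 ≤ 1709 / 54 + 38881 / 432 * p - 121 * p ^ 2 := by nlinarith
  have q1 : 0 ≤ 40 / 3 - 12 * p - p ^ 2 := by nlinarith
  have q2 : 0 ≤ 202 / 3 - 493 / 24 * p - 91 / 2 * p ^ 2 := by nlinarith
  have t1 := mul_nonneg (mul_nonneg (sq_nonneg r) (sub_nonneg.2 hp1)) c3
  have t2 := mul_nonneg (pow_nonneg hr 3) c2
  have t3 := mul_nonneg (mul_nonneg (mul_nonneg hA hr) (sub_nonneg.2 hp1)) q1
  have t4 := mul_nonneg (mul_nonneg hA (sq_nonneg r)) q2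
  have t5 := mul_nonneg hA (pow_nonneg hr 3)
  have t6 := pow_nonneg hr 4
  -- expanded in powers of `r` and `A` and reduced modulo `hA2`, the difference of the two sides
  -- has the coefficients below, each nonnegative for `p ∈ [0, 1]`
  linear_combination 4 * t1 + 4 * t2 + 4 * t3 + 4 * t4 + 8053 / 36 * t5 + 30055 / 432 * t6
    - 4 * (2 + 4 * A + 3 / 4 * A ^ 2 + 40 * r + 91 / 4 * r * A + 121 / 2 * r ^ 2 - 2 * p
      - 1 / 2 * p * A - 137 / 4 * p * r - 3 / 2 * p ^ 2 * r) * hA2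

theorem le_bernoulliKL_of_margin {p L t u β : ℝ} (hp0 : 0 < p) (hp1 : p < 1) (hL : 0 < L)
    (ht : 0 < t) (hu : u = √(2 * p * (1 - p) * L / t) + L / (3 * t))
    (hβ : β = p - 2 * u - 3 / (2 * t) * L) (hβpos : 0 < β) :
    L / t ≤ bernoulliKL (p - u) β := by
  set r := L / t with hr
  set A := √(2 * p * (1 - p) * L / t)
  have hA : 0 ≤ A := sqrt_nonneg _
  have hA2 : A ^ 2 = 2 * p * (1 - p) * r := by
    rw [sq_sqrt (div_nonneg (mul_nonneg (mul_nonneg (by positivity) (sub_pos.2 hp1).le) hL.le)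
      ht.le)]
    ring
  have ha : p - u = p - A - r / 3 := by rw [hu, hr]; field_simp; ring
  have hb : β = p - 2 * A - 13 / 6 * r := by rw [hβ, hu, hr]; field_simp; ring
  have hr0 : 0 < r := div_pos hL ht
  have hba : β < p - u := by linarith
  refine le_trans ?_ (le_bernoulliKL hβpos hba (by linarith))
  have hpoly := margin_poly_le hp0.le hp1.le hr0.le hA hA2 ha hb
  have hD : 0 < 4 * (1 - β) * ((1 - (p - u)) + (1 - β)) := by
    have : 0 < 1 - β := by linarith
    have : 0 < 1 - (p - u) := by linarith
    positivity
  rw [le_sub_iff_add_le, add_div' _ _ _ hD.ne', div_le_div_iff₀ hD (by linarith)]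
  linear_combination hpoly

theorem measureReal_Iio_quantile_le (ν : Measure ℝ) [IsProbabilityMeasure ν] {β : ℝ}
    (hβ : 0 < β) : ν.real (Iio (sInf {x | β ≤ cdf ν x})) ≤ β := by
  obtain ⟨N, hN⟩ := eventually_atBot.1 ((tendsto_cdf_atBot ν).eventually (gt_mem_nhds hβ))
  have hbdd : BddBelow {x | β ≤ cdf ν x} :=
    ⟨N, fun x hx => le_of_not_gt fun hxN => (hN x hxN.le).not_ge hx⟩
  have hleft : Function.leftLim (cdf ν) (sInf {x | β ≤ cdf ν x}) ≤ β :=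
    le_of_tendsto ((cdf ν).mono.tendsto_leftLim _) <| eventually_nhdsWithin_of_forall
      fun x hx => (not_le.1 (notMem_of_lt_csInf (s := {x | β ≤ cdf ν x}) hx hbdd)).le
  have hIio := (cdf ν).measure_Iio (tendsto_cdf_atBot ν) (sInf {x | β ≤ cdf ν x})
  rw [measure_cdf, sub_zero] at hIio
  rw [measureReal_def, hIio]
  exact ENNReal.toReal_le_of_le_ofReal hβ.le (ENNReal.ofReal_le_ofReal hleft)

theorem le_card_lt_of_empQuantile_lt {t : ℕ} {y : ℕ → ℝ} {α g : ℝ} (hα : α ≤ 1)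
    (h : empQuantile t y α < g) : α * t ≤ #{i : Fin t | y i < g} := by
  obtain ⟨M, hM⟩ := ((Finset.range t).image y).exists_le
  have hne : {x : ℝ | α * t ≤ (((Finset.range t).filter fun s => y s ≤ x).card : ℝ)}.Nonempty := by
    refine ⟨M, ?_⟩
    rw [mem_ofPred_eq, Finset.filter_true_of_mem fun s hs => hM _ (Finset.mem_image_of_mem y hs),
      Finset.card_range]
    exact mul_le_of_le_one_left (Nat.cast_nonneg t) hα
  obtain ⟨z, hz, hzg⟩ := exists_lt_of_csInf_lt hne h
  have hle : #{s ∈ Finset.range t | y s ≤ z} ≤ #{s ∈ Finset.range t | y s < g} :=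
    Finset.card_le_card fun s hs => by
      simp only [Finset.mem_filter] at hs ⊢
      exact ⟨hs.1, hs.2.trans_lt hzg⟩
  have hcount : #{s ∈ Finset.range t | y s < g} = #{i : Fin t | y i < g} := by
    simp only [Finset.card_filter]
    exact (Fin.sum_univ_eq_sum_range (fun s => if y s < g then 1 else 0) t).symm
  exact hz.trans (by exact_mod_cast hle.trans hcount.le)

section

variable {Ω : Type*} [MeasurableSpace Ω] {μ : Measure Ω}

theorem measureReal_lt_quantile_le [IsProbabilityMeasure μ] {X : Ω → ℝ} (hX : Measurable X)
    {β : ℝ} (hβ : 0 < β) : μ.real {ω | X ω < sInf {x | β ≤ μ.real {ω | X ω ≤ x}}} ≤ β := by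
  have := Measure.isProbabilityMeasure_map (μ := μ) hX.aemeasurable
  have hcdf : ∀ x, cdf (μ.map X) x = μ.real {ω | X ω ≤ x} := fun x => by
    rw [cdf_eq_real, map_measureReal_apply hX measurableSet_Iic]
    rfl
  have hset : {x | β ≤ μ.real {ω | X ω ≤ x}} = {x | β ≤ cdf (μ.map X) x} := by simp only [hcdf]
  rw [hset]
  change μ.real (X ⁻¹' Iio _) ≤ β
  rw [← map_measureReal_apply hX measurableSet_Iio]
  exact measureReal_Iio_quantile_le _ hβ

theorem mgf_indicator_one [IsProbabilityMeasure μ] {E : Set Ω} (hE : MeasurableSet E) (l : ℝ) :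
    mgf (E.indicator fun _ => (1 : ℝ)) μ l = 1 + μ.real E * (exp l - 1) := by
  have hexp : (fun ω => exp (l * E.indicator (fun _ => (1 : ℝ)) ω))
      = fun ω => E.indicator (fun _ => exp l - 1) ω + 1 := by
    ext ω
    by_cases hω : ω ∈ E <;> simp [hω]
  rw [mgf, hexp, integral_add ((integrable_const _).indicator hE) (integrable_const 1),
    integral_indicator_const _ hE]
  simp only [smul_eq_mul, integral_const, probReal_univ]
  ring

theorem ProbabilityTheory.iIndepFun.iIndepSet_preimage {ι 𝓧 : Type*} [MeasurableSpace 𝓧]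
    {X : ι → Ω → 𝓧} (hX : iIndepFun X μ) (hXm : ∀ i, Measurable (X i)) {S : Set 𝓧}
    (hS : MeasurableSet S) : iIndepSet (fun i => X i ⁻¹' S) μ :=
  (iIndepSet_iff_meas_biInter fun i => hXm i hS).2 fun s =>
    hX.measure_inter_preimage_eq_mul s fun _ _ => hS

open Classical in
theorem measureReal_card_ge_le_exp_bernoulliKL {ι : Type*} [Fintype ι] {E : ι → Set Ω}
    (hE : ∀ i, MeasurableSet (E i)) (hind : iIndepSet E μ) {a b : ℝ} (hb : 0 < b)
    (hba : b < a) (ha : a < 1) (hEb : ∀ i, μ.real (E i) ≤ b) :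
    μ.real {ω | a * Fintype.card ι ≤ #{i | ω ∈ E i}} ≤
      exp (-(Fintype.card ι * bernoulliKL a b)) := by
  have := hind.isProbabilityMeasure
  set X : ι → Ω → ℝ := fun i => (E i).indicator fun _ => 1 with hX
  have hXm : ∀ i, Measurable (X i) := fun i => measurable_const.indicator (hE i)
  set n := Fintype.card ι
  have ha0 : 0 < a := hb.trans hba
  have hm : 0 < 1 - a := by linarith
  have hn : 0 < 1 - b := by linarith
  -- the exponential tilt under which the Bernoulli law of parameter `b` has mean `a`
  set l := log (a * (1 - b) / (b * (1 - a))) with hl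
  have hl0 : 0 ≤ l := log_nonneg <| (one_le_div (by positivity)).2 (by nlinarith)
  have hexpl : exp l = a * (1 - b) / (b * (1 - a)) := exp_log (by positivity)
  have hmgf : mgf (∑ i, X i) μ l ≤ ((1 - b) / (1 - a)) ^ n := by
    rw [hind.iIndepFun_indicator.mgf_sum hXm]
    refine (Finset.prod_le_prod (fun i _ => mgf_nonneg) fun i _ => ?_).trans_eq
      (by rw [Finset.prod_const, Finset.card_univ])
    rw [mgf_indicator_one (hE i)]
    calc 1 + μ.real (E i) * (exp l - 1) ≤ 1 + b * (exp l - 1) := by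
          gcongr
          · linarith [one_le_exp hl0]
          · exact hEb i
      _ = (1 - b) / (1 - a) := by rw [hexpl]; field_simp; ring
  have hsum : ∀ ω, (∑ i, X i) ω = #{i | ω ∈ E i} := fun ω => by
    simp [hX, Finset.sum_apply, Set.indicator_apply]
  have hKL : bernoulliKL a b = a * l - log ((1 - b) / (1 - a)) := by
    rw [bernoulliKL, hl, mul_div_mul_comm, log_mul (by positivity) (by positivity),
      ← inv_div (1 - b), log_inv]
    ring
  calc μ.real {ω | a * n ≤ #{i | ω ∈ E i}} = μ.real {ω | a * n ≤ (∑ i, X i) ω} := by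
        simp only [hsum]
    _ ≤ exp (-l * (a * n)) * mgf (∑ i, X i) μ l :=
        measure_ge_le_exp_mul_mgf _ hl0 <| integrable_exp_mul_of_le l n hl0 (by fun_prop) <|
          ae_of_all _ fun ω => by
            rw [hsum]
            exact_mod_cast Finset.card_le_univ _
    _ ≤ exp (-l * (a * n)) * ((1 - b) / (1 - a)) ^ n := by gcongr
    _ = exp (-(n * bernoulliKL a b)) := by
        rw [hKL, ← exp_log (by positivity : 0 < (1 - b) / (1 - a)), ← exp_nat_mul, ← exp_add,
          exp_log (by positivity)]
        ring_nf

theorem ofReal_one_sub_le_measure [IsProbabilityMeasure μ] {A : Set Ω} {δ : ℝ} (hδ : 0 ≤ δ)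
    (h : μ Aᶜ ≤ ENNReal.ofReal δ) : ENNReal.ofReal (1 - δ) ≤ μ A := by
  rw [ENNReal.ofReal_sub _ hδ, ENNReal.ofReal_one, tsub_le_iff_right]
  calc 1 = μ (A ∪ Aᶜ) := by rw [union_compl_self, measure_univ]
    _ ≤ μ A + μ Aᶜ := measure_union_le _ _
    _ ≤ μ A + ENNReal.ofReal δ := by gcongr

end

theorem empirical_quantile_upper_confidence_general
    {Ω : Type*} [MeasurableSpace Ω] (μ : Measure Ω) [IsProbabilityMeasure μ]
    (t : ℕ) (ht : 1 ≤ t)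
    (Y : ℕ → Ω → ℝ) (hmeas : ∀ s < t, Measurable (Y s))
    (hiid : iIndepFun (fun s : Fin t => Y s) μ)
    (hident : ∀ s < t, Measure.map (Y s) μ = Measure.map (Y 0) μ)
    (p : ℝ) (hp : p ∈ Set.Ioo (0 : ℝ) 1)
    (δ : ℝ) (hδ : δ ∈ Set.Ioo (0 : ℝ) 1)
    (u : ℝ)
    (hu : u = Real.sqrt (2 * p * (1 - p) * Real.log (1 / δ) / t)
      + Real.log (1 / δ) / (3 * t))
    (β : ℝ) (hβ : β = p - 2 * u - 3 / (2 * t) * Real.log (1 / δ)) (hβpos : 0 < β)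
    (Gβ : ℝ) (hGβ : Gβ = sInf {x : ℝ | β ≤ (μ {ω | Y 0 ω ≤ x}).toReal}) :
    ENNReal.ofReal (1 - δ) ≤ μ {ω | Gβ ≤ empQuantile t (fun s => Y s ω) (p - u)} := by
  obtain ⟨hp0, hp1⟩ := hp
  obtain ⟨hδ0, hδ1⟩ := hδ
  have ht0 : (0 : ℝ) < t := by exact_mod_cast ht
  have hL : 0 < log (1 / δ) := log_pos (one_lt_one_div hδ0 hδ1)
  have hu0 : 0 ≤ u := hu ▸ by positivity
  have hβx : β < p - u := by
    have : 0 < 3 / (2 * t) * log (1 / δ) := mul_pos (by positivity) hL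
    linarith
  have hx1 : p - u < 1 := by linarith
  have hlaw : ∀ i : Fin t, μ.real {ω | Y i ω < Gβ} ≤ β := fun i => by
    change μ.real (Y i ⁻¹' Iio Gβ) ≤ β
    rw [← map_measureReal_apply (hmeas i i.2) measurableSet_Iio, hident i i.2,
      map_measureReal_apply (hmeas 0 ht) measurableSet_Iio, hGβ]
    exact measureReal_lt_quantile_le (hmeas 0 ht) hβpos
  have hbad := measureReal_card_ge_le_exp_bernoulliKL (E := fun i : Fin t => {ω | Y i ω < Gβ})
    (fun i => hmeas i i.2 measurableSet_Iio)
    (hiid.iIndepSet_preimage (fun i => hmeas i i.2) measurableSet_Iio) hβpos hβx hx1 hlaw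
  rw [Fintype.card_fin] at hbad
  have hδbound : exp (-(t * bernoulliKL (p - u) β)) ≤ δ := by
    calc _ ≤ exp (-(t * (log (1 / δ) / t))) := by
          gcongr
          exact le_bernoulliKL_of_margin hp0 hp1 hL ht0 hu hβ hβpos
      _ = δ := by rw [mul_div_cancel₀ _ ht0.ne', exp_neg, exp_log (one_div_pos.2 hδ0), one_div,
          inv_inv]
  refine ofReal_one_sub_le_measure hδ0.le ((measure_mono fun ω hω => ?_).trans
    ((ENNReal.le_ofReal_iff_toReal_le (measure_ne_top _ _) hδ0.le).2 (hbad.trans hδbound)))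
  simpa using le_card_lt_of_empQuantile_lt hx1.le (not_le.1 hω)

/-- upper confidence bound for the empirical quantile.  If `Y 0,…,Y (t-1)`
are i.i.d. with `Pr(Y ≤ G_p) = p` where `G_p` is the `p`-quantile,
`u_t = √(2p(1-p)ln(1/δ)/t) + ln(1/δ)/(3t)`, and `β = p - 2u_t - (3/(2t))ln(1/δ) > 0`
with `β`-quantile `G_β`, then with probability at least `1-δ` we have
`G_β ≤ q̂_t(p - u_t)`. -/
theorem empirical_quantile_upper_confidence
    {Ω : Type*} [MeasurableSpace Ω] (μ : Measure Ω) [IsProbabilityMeasure μ]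
    (t : ℕ) (ht : 1 ≤ t)
    (Y : ℕ → Ω → ℝ) (hmeas : ∀ s < t, Measurable (Y s))
    (hiid : iIndepFun (fun s : Fin t => Y s) μ)
    (hident : ∀ s < t, Measure.map (Y s) μ = Measure.map (Y 0) μ)
    (p : ℝ) (hp : p ∈ Set.Ioo (0 : ℝ) 1)
    (Gp : ℝ) (hGp : Gp = sInf {x : ℝ | p ≤ (μ {ω | Y 0 ω ≤ x}).toReal})
    (hnoatom : (μ {ω | Y 0 ω ≤ Gp}).toReal = p)
    (δ : ℝ) (hδ : δ ∈ Set.Ioo (0 : ℝ) 1)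
    (u : ℝ)
    (hu : u = Real.sqrt (2 * p * (1 - p) * Real.log (1 / δ) / t)
      + Real.log (1 / δ) / (3 * t))
    (β : ℝ) (hβ : β = p - 2 * u - 3 / (2 * t) * Real.log (1 / δ)) (hβpos : 0 < β)
    (Gβ : ℝ) (hGβ : Gβ = sInf {x : ℝ | β ≤ (μ {ω | Y 0 ω ≤ x}).toReal}) :
    ENNReal.ofReal (1 - δ) ≤ μ {ω | Gβ ≤ empQuantile t (fun s => Y s ω) (p - u)} :=
  empirical_quantile_upper_confidence_general μ t ht Y hmeas hiid hident p hp δ hδ u hu β hβ hβpos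
    Gβ hGβ
end
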